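/- arXiv:1501.06556 — 3 statements merged into one kernel-verified Lean document; each statement's English description precedes it below -/
import Mathlib

section
/- (Localized Poincaré inequality.) Let (Ω,d,μ) be a metric measure space with μ(Ω) < ∞ whose isoperimetric profile I is concave, continuous, I(0) = 0, strictly positive on (0, μ(Ω)), symmetric about μ(Ω)/2, and increasing on (0, μ(Ω)/2]. Let f : Ω → ℝ be Lipschitz and integrable with |∇f| integrable, let m be a median of f, and assume the co-area inequality for f: ∫_{−∞}^{∞} I(μ{f > s}) ds ≤ ∫_Ω |∇f| dμ. Then for every measurable A ⊆ Ω with μ(A) > 0, ∫_A |f − m| dμ ≤ [min{μ(A), μ(Ω)/2} / I(min{μ(A), μ(Ω)/2})] · ∫_Ω |∇f| dμ. -/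
open MeasureTheory Filter Set Topology
open scoped ENNReal NNReal

/-- The modulus of the gradient of `f` at `x`:
`|∇f|(x) = limsup_{y→x} |f(x) - f(y)| / d(x,y)`. -/
noncomputable def gradMod {Ω : Type*} [MetricSpace Ω] (f : Ω → ℝ) (x : Ω) : ℝ :=
  Filter.limsup (fun y => |f x - f y| / dist x y) (𝓝[≠] x)

/-- The Minkowski content (perimeter) of a set `A`:
`μ⁺(A) = liminf_{h→0⁺} (μ(A_h) - μ(A))/h`, where `A_h` is the open `h`-thickening of `A`. -/
noncomputable def minkContent {Ω : Type*} [MetricSpace Ω] [MeasurableSpace Ω]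
    (μ : Measure Ω) (A : Set Ω) : ℝ≥0∞ :=
  Filter.liminf (fun h : ℝ => (μ (Metric.thickening h A) - μ A) / ENNReal.ofReal h)
    (𝓝[>] (0 : ℝ))

/-- The isoperimetric profile of `(Ω,d,μ)`:
`I(t) = inf {μ⁺(A) : A Borel, μ(A) = t}`. -/
noncomputable def isoProfile {Ω : Type*} [MetricSpace Ω] [MeasurableSpace Ω]
    (μ : Measure Ω) (t : ℝ≥0∞) : ℝ≥0∞ :=
  ⨅ (A : Set Ω) (_ : MeasurableSet A) (_ : μ A = t), minkContent μ A

/-- `m` is a median of `f` with respect to `μ`. -/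
def IsMedian {Ω : Type*} [MeasurableSpace Ω] (μ : Measure Ω) (f : Ω → ℝ) (m : ℝ) : Prop :=
  μ Set.univ / 2 ≤ μ {x | m ≤ f x} ∧ μ Set.univ / 2 ≤ μ {x | f x ≤ m}


/-!
By the layer-cake formula,
`∫_A |f - m| = ∫_{s > m} μ(A ∩ {f > s}) ds + ∫_{s < m} μ(A ∩ {f < s}) ds`.
Because `m` is a median, the level sets `S = {f > s}` (`s > m`) and `S = {f ≤ s}` (`s < m`) have
measure at most `μ(Ω)/2`. Concavity and `I 0 = 0` make `I u / u` nonincreasing, and with the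
monotonicity of `I` on `(0, μ(Ω)/2]` this gives `μ(A ∩ S) ≤ (t / I t) · I(μ S)` for
`t = min(μ A, μ(Ω)/2)`. Symmetry of `I` turns `I(μ{f ≤ s})` into `I(μ{f > s})`, so integrating
over `s` and applying the co-area inequality finishes the proof.
-/

theorem Real.limsup_nonneg {α : Type*} {l : Filter α} {u : α → ℝ} (hu : 0 ≤ u) :
    0 ≤ limsup u l := by
  rw [limsup_eq]
  rcases l.eq_or_neBot with rfl | _
  · simp
  · refine Real.sInf_nonneg fun a ha => ?_
    obtain ⟨x, hx⟩ := ha.exists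
    exact (hu x).trans hx

theorem gradMod_nonneg {Ω : Type*} [MetricSpace Ω] (f : Ω → ℝ) (x : Ω) : 0 ≤ gradMod f x :=
  Real.limsup_nonneg fun _ => by positivity

theorem ENNReal.ofReal_abs_eq_add (a : ℝ) :
    ENNReal.ofReal |a| = ENNReal.ofReal a + ENNReal.ofReal (-a) := by
  rcases le_total a 0 with h | h
  · simp [abs_of_nonpos h, ENNReal.ofReal_of_nonpos h]
  · simp [abs_of_nonneg h, ENNReal.ofReal_of_nonpos (neg_nonpos.2 h)]

section LayerCake

variable {α : Type*} [MeasurableSpace α] (ν : Measure α) {g : α → ℝ}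

theorem lintegral_ofReal_sub_const (hg : AEMeasurable g ν) (m : ℝ) :
    ∫⁻ x, ENNReal.ofReal (g x - m) ∂ν = ∫⁻ s in Ioi m, ν {x | s < g x} := by
  have hmax : ∀ x, ENNReal.ofReal (g x - m) = ENNReal.ofReal (max (g x - m) 0) := fun x => by
    simp [ENNReal.ofReal_max]
  rw [lintegral_congr hmax, lintegral_eq_lintegral_meas_lt ν (f := fun x => max (g x - m) 0)
    (ae_of_all _ fun _ => le_max_right _ _) ((hg.sub_const m).max aemeasurable_const),
    ← (measurePreserving_add_left volume m).setLIntegral_comp_preimage_emb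
      (measurableEmbedding_addLeft m) (fun s => ν {x | s < g x}), preimage_const_add_Ioi, sub_self]
  refine setLIntegral_congr_fun measurableSet_Ioi fun s (hs : 0 < s) => ?_
  congr 1
  ext x
  simp only [mem_ofPred_eq, lt_max_iff, hs.not_gt, or_false]
  constructor <;> intro h <;> linarith

theorem lintegral_ofReal_const_sub (hg : AEMeasurable g ν) (m : ℝ) :
    ∫⁻ x, ENNReal.ofReal (m - g x) ∂ν = ∫⁻ s in Iio m, ν {x | g x < s} := by
  have h := lintegral_ofReal_sub_const ν hg.neg (-m)
  simp only [Pi.neg_apply, sub_neg_eq_add, neg_add_eq_sub] at h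
  rw [h, ← (Measure.measurePreserving_neg volume).setLIntegral_comp_preimage_emb
    measurableEmbedding_neg, neg_preimage, neg_Ioi, neg_neg]
  simp only [neg_lt_neg_iff]

theorem lintegral_ofReal_abs_sub_const (hg : AEMeasurable g ν) (m : ℝ) :
    ∫⁻ x, ENNReal.ofReal |g x - m| ∂ν =
      (∫⁻ s in Ioi m, ν {x | s < g x}) + ∫⁻ s in Iio m, ν {x | g x < s} := by
  simp only [ENNReal.ofReal_abs_eq_add, neg_sub]
  rw [lintegral_add_left' (hg.sub_const m).ennreal_ofReal,
    lintegral_ofReal_sub_const ν hg, lintegral_ofReal_const_sub ν hg]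

theorem lintegral_ofReal_abs_sub_const_le (hg : AEMeasurable g ν) {m : ℝ} {C : ℝ≥0∞} (hC : C ≠ ∞)
    {F : ℝ → ℝ≥0∞} (hupper : ∀ s ∈ Ioi m, ν {x | s < g x} ≤ C * F s)
    (hlower : ∀ s ∈ Iio m, ν {x | g x < s} ≤ C * F s) :
    ∫⁻ x, ENNReal.ofReal |g x - m| ∂ν ≤ C * ∫⁻ s, F s := by
  rw [lintegral_ofReal_abs_sub_const ν hg]
  calc _ ≤ (∫⁻ s in Ioi m, C * F s) + ∫⁻ s in Iio m, C * F s :=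
        add_le_add (setLIntegral_mono' measurableSet_Ioi hupper)
          (setLIntegral_mono' measurableSet_Iio hlower)
    _ = ∫⁻ s in Ioi m ∪ Iio m, C * F s :=
        (lintegral_union measurableSet_Iio (disjoint_left.2 fun _ h1 h2 => lt_asymm h1 h2)).symm
    _ ≤ ∫⁻ s, C * F s := setLIntegral_le_lintegral _ _
    _ = C * ∫⁻ s, F s := lintegral_const_mul' _ _ hC

end LayerCake

theorem le_div_mul_of_concaveOn {I : ℝ → ℝ} {b c t u v : ℝ} (hconc : ConcaveOn ℝ (Icc 0 b) I)
    (h0 : I 0 = 0) (hmono : MonotoneOn I (Ioc 0 c)) (htb : t ≤ b) (htc : t ≤ c) (hIt : 0 < I t)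
    (hu : 0 < u) (hut : u ≤ t) (huv : u ≤ v) (hvc : v ≤ c) :
    u ≤ t / I t * I v := by
  have ht : 0 < t := hu.trans_le hut
  have hslope : I t / t ≤ I u / u := by
    simpa [slope_def_field, h0] using hconc.antitoneOn_slope_gt ⟨le_rfl, ht.le.trans htb⟩
      ⟨⟨hu.le, hut.trans htb⟩, hu⟩ ⟨⟨ht.le, htb⟩, ht⟩ hut
  have hIuv : I u ≤ I v := hmono ⟨hu, hut.trans htc⟩ ⟨hu.trans_le huv, hvc⟩ huv
  rw [div_le_div_iff₀ ht hu] at hslope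
  rw [div_mul_eq_mul_div, le_div_iff₀ hIt]
  nlinarith

section MeasureSpace

variable {Ω : Type*} [MeasurableSpace Ω] {μ : Measure Ω} [IsFiniteMeasure μ]

theorem IsMedian.measure_gt_le {f : Ω → ℝ} {m : ℝ} (hm : IsMedian μ f m)
    (hf : AEMeasurable f μ) : μ {x | m < f x} ≤ μ univ / 2 := by
  have hcompl : {x | m < f x} = {x | f x ≤ m}ᶜ := by ext; simp
  rw [hcompl, measure_compl₀ (nullMeasurableSet_le hf aemeasurable_const) (measure_ne_top μ _)]
  calc μ univ - μ {x | f x ≤ m} ≤ μ univ - μ univ / 2 := tsub_le_tsub_left hm.2 _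
    _ = μ univ / 2 := ENNReal.sub_half (measure_ne_top μ _)

theorem IsMedian.measure_lt_le {f : Ω → ℝ} {m : ℝ} (hm : IsMedian μ f m)
    (hf : AEMeasurable f μ) : μ {x | f x < m} ≤ μ univ / 2 := by
  have hcompl : {x | f x < m} = {x | m ≤ f x}ᶜ := by ext; simp
  rw [hcompl, measure_compl₀ (nullMeasurableSet_le aemeasurable_const hf) (measure_ne_top μ _)]
  calc μ univ - μ {x | m ≤ f x} ≤ μ univ - μ univ / 2 := tsub_le_tsub_left hm.1 _
    _ = μ univ / 2 := ENNReal.sub_half (measure_ne_top μ _)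

theorem apply_toReal_measure_compl_of_symm {I : ℝ → ℝ}
    (hsym : ∀ t ∈ Icc 0 (μ univ).toReal, I ((μ univ).toReal - t) = I t) {S : Set Ω}
    (hS : NullMeasurableSet S μ) : I (μ Sᶜ).toReal = I (μ S).toReal := by
  rw [measure_compl₀ hS (measure_ne_top μ _),
    ENNReal.toReal_sub_of_le (measure_mono (subset_univ _)) (measure_ne_top μ _)]
  exact hsym _ ⟨ENNReal.toReal_nonneg, ENNReal.toReal_mono (measure_ne_top μ _)
    (measure_mono (subset_univ _))⟩

theorem measure_inter_le_of_concaveOn {I : ℝ → ℝ} (hconc : ConcaveOn ℝ (Icc 0 (μ univ).toReal) I)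
    (h0 : I 0 = 0) (hmono : MonotoneOn I (Ioc 0 ((μ univ).toReal / 2))) {A S : Set Ω} {t : ℝ}
    (hAt : min (μ A).toReal ((μ univ).toReal / 2) ≤ t) (htT : t ≤ (μ univ).toReal / 2)
    (hIt : 0 < I t) (hS : μ S ≤ μ univ / 2) :
    μ (S ∩ A) ≤ ENNReal.ofReal (t / I t) * ENNReal.ofReal (I (μ S).toReal) := by
  have hST : (μ S).toReal ≤ (μ univ).toReal / 2 := by
    simpa using ENNReal.toReal_mono (by simp [ENNReal.div_eq_top]) hS
  have huv : (μ (S ∩ A)).toReal ≤ (μ S).toReal :=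
    ENNReal.toReal_mono (measure_ne_top μ _) (measure_mono inter_subset_left)
  have hut : (μ (S ∩ A)).toReal ≤ t :=
    (le_min (ENNReal.toReal_mono (measure_ne_top μ _) (measure_mono inter_subset_right))
      (huv.trans hST)).trans hAt
  have ht : 0 ≤ t := (le_min ENNReal.toReal_nonneg (by positivity)).trans hAt
  rw [← ENNReal.ofReal_toReal (measure_ne_top μ (S ∩ A)), ← ENNReal.ofReal_mul (by positivity)]
  rcases (μ (S ∩ A)).toReal_nonneg.eq_or_lt with hu | hu
  · simp [← hu]
  · exact ENNReal.ofReal_le_ofReal <| le_div_mul_of_concaveOn hconc h0 hmono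
      (htT.trans (half_le_self ENNReal.toReal_nonneg)) htT hIt hu hut huv hST

theorem setLIntegral_abs_sub_median_le {I : ℝ → ℝ}
    (hconc : ConcaveOn ℝ (Icc 0 (μ univ).toReal) I) (h0 : I 0 = 0)
    (hsym : ∀ t ∈ Icc 0 (μ univ).toReal, I ((μ univ).toReal - t) = I t)
    (hmono : MonotoneOn I (Ioc 0 ((μ univ).toReal / 2))) {f : Ω → ℝ} {m : ℝ}
    (hf : AEMeasurable f μ) (hm : IsMedian μ f m) {A : Set Ω} (hA : MeasurableSet A) {t : ℝ}
    (hAt : min (μ A).toReal ((μ univ).toReal / 2) ≤ t) (htT : t ≤ (μ univ).toReal / 2)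
    (hIt : 0 < I t) :
    ∫⁻ x in A, ENNReal.ofReal |f x - m| ∂μ ≤
      ENNReal.ofReal (t / I t) * ∫⁻ s, ENNReal.ofReal (I (μ {x | s < f x}).toReal) := by
  have hbound {S : Set Ω} := measure_inter_le_of_concaveOn hconc h0 hmono (S := S) hAt htT hIt
  refine lintegral_ofReal_abs_sub_const_le _ hf.restrict ENNReal.ofReal_ne_top
    (fun s (hs : m < s) => ?_) (fun s (hs : s < m) => ?_)
  · rw [Measure.restrict_apply' hA]
    exact hbound ((measure_mono fun x (hx : s < f x) => hs.trans hx).trans (hm.measure_gt_le hf))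
  · rw [Measure.restrict_apply' hA,
      ← apply_toReal_measure_compl_of_symm hsym (nullMeasurableSet_lt aemeasurable_const hf)]
    refine (measure_mono (inter_subset_inter_left _ fun x (hx : f x < s) => hx.not_gt)).trans
      (hbound ?_)
    exact (measure_mono fun x (hx : ¬ s < f x) => (not_lt.1 hx).trans_lt hs).trans
      (hm.measure_lt_le hf)

end MeasureSpace

theorem localized_poincare_general {Ω : Type*} [MetricSpace Ω] [MeasurableSpace Ω]
    (μ : Measure Ω) [IsFiniteMeasure μ]
    (I : ℝ → ℝ)
    (hIconc : ConcaveOn ℝ (Set.Icc 0 (μ Set.univ).toReal) I)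
    (hI0 : I 0 = 0)
    (hIpos : ∀ t : ℝ, 0 < t → t < (μ Set.univ).toReal → 0 < I t)
    (hIsym : ∀ t ∈ Set.Icc 0 (μ Set.univ).toReal, I ((μ Set.univ).toReal - t) = I t)
    (hImono : MonotoneOn I (Set.Ioc 0 ((μ Set.univ).toReal / 2)))
    (f : Ω → ℝ)
    (hfint : Integrable f μ)
    (m : ℝ) (hm : IsMedian μ f m)
    (hcoarea : ∫⁻ s : ℝ, ENNReal.ofReal (I ((μ {x | s < f x}).toReal)) ≤
      ENNReal.ofReal (∫ x, gradMod f x ∂μ)) :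
    ∀ A : Set Ω, MeasurableSet A → 0 < μ A →
      ∫ x in A, |f x - m| ∂μ ≤
        (min (μ A).toReal ((μ Set.univ).toReal / 2) /
          I (min (μ A).toReal ((μ Set.univ).toReal / 2))) * ∫ x, gradMod f x ∂μ := by
  intro A hA hApos
  set t := min (μ A).toReal ((μ univ).toReal / 2)
  have hA0 : 0 < (μ A).toReal := ENNReal.toReal_pos hApos.ne' (measure_ne_top μ A)
  have hAT : (μ A).toReal ≤ (μ univ).toReal :=
    ENNReal.toReal_mono (measure_ne_top μ _) (measure_mono (subset_univ A))
  have ht : 0 < t := lt_min hA0 (by linarith)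
  have hIt : 0 < I t := hIpos t ht ((min_le_right _ _).trans_lt (by linarith))
  have hint : Integrable (fun x => |f x - m|) (μ.restrict A) :=
    (hfint.sub (integrable_const m)).abs.restrict
  have hgrad : 0 ≤ ∫ x, gradMod f x ∂μ := integral_nonneg (gradMod_nonneg f)
  refine (ENNReal.ofReal_le_ofReal_iff (by positivity)).1 ?_
  calc ENNReal.ofReal (∫ x in A, |f x - m| ∂μ)
      = ∫⁻ x in A, ENNReal.ofReal |f x - m| ∂μ :=
        ofReal_integral_eq_lintegral_ofReal hint (ae_of_all _ fun _ => abs_nonneg _)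
    _ ≤ ENNReal.ofReal (t / I t) * ∫⁻ s, ENNReal.ofReal (I (μ {x | s < f x}).toReal) :=
        setLIntegral_abs_sub_median_le hIconc hI0 hIsym hImono hfint.aemeasurable hm hA le_rfl
          (min_le_right _ _) hIt
    _ ≤ ENNReal.ofReal (t / I t) * ENNReal.ofReal (∫ x, gradMod f x ∂μ) := by gcongr
    _ = ENNReal.ofReal (t / I t * ∫ x, gradMod f x ∂μ) := (ENNReal.ofReal_mul (by positivity)).symm

/-- **localized Poincaré inequality.** On a finite metric measure space whose
isoperimetric profile `I` is concave, continuous, zero at zero, positive on `(0, μ(Ω))`,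
symmetric about `μ(Ω)/2` and increasing on `(0, μ(Ω)/2]`, every Lipschitz integrable `f`
with integrable modulus of gradient satisfying the co-area inequality obeys, for every
measurable `A` of positive measure,
`∫_A |f - m| dμ ≤ (min{μA, μΩ/2} / I(min{μA, μΩ/2})) ∫_Ω |∇f| dμ`,
where `m` is a median of `f`. -/
theorem localized_poincare {Ω : Type*} [MetricSpace Ω] [MeasurableSpace Ω] [BorelSpace Ω]
    (μ : Measure Ω) [IsFiniteMeasure μ] [IsFiniteMeasureOnCompacts μ]
    (I : ℝ → ℝ)
    (hIprof : ∀ t : ℝ, 0 ≤ t → ENNReal.ofReal t < μ Set.univ →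
      ENNReal.ofReal (I t) = isoProfile μ (ENNReal.ofReal t))
    (hIconc : ConcaveOn ℝ (Set.Icc 0 (μ Set.univ).toReal) I)
    (hIcont : ContinuousOn I (Set.Icc 0 (μ Set.univ).toReal))
    (hI0 : I 0 = 0)
    (hIpos : ∀ t : ℝ, 0 < t → t < (μ Set.univ).toReal → 0 < I t)
    (hIsym : ∀ t ∈ Set.Icc 0 (μ Set.univ).toReal, I ((μ Set.univ).toReal - t) = I t)
    (hImono : MonotoneOn I (Set.Ioc 0 ((μ Set.univ).toReal / 2)))
    (K : ℝ≥0) (f : Ω → ℝ) (hlip : LipschitzWith K f)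
    (hfint : Integrable f μ) (hgint : Integrable (gradMod f) μ)
    (m : ℝ) (hm : IsMedian μ f m)
    (hcoarea : ∫⁻ s : ℝ, ENNReal.ofReal (I ((μ {x | s < f x}).toReal)) ≤
      ENNReal.ofReal (∫ x, gradMod f x ∂μ)) :
    ∀ A : Set Ω, MeasurableSet A → 0 < μ A →
      ∫ x in A, |f x - m| ∂μ ≤
        (min (μ A).toReal ((μ Set.univ).toReal / 2) /
          I (min (μ A).toReal ((μ Set.univ).toReal / 2))) * ∫ x, gradMod f x ∂μ :=
  localized_poincare_general μ I hIconc hI0 hIpos hIsym hImono f hfint m hm hcoarea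
end

section
/- (Euclidean L¹ uncertainty inequality with weak-L^n weights.) Let n ≥ 2. There exists a constant c(n) > 0 such that for every measurable w : ℝⁿ → (0,∞) with ‖1/w‖_{L^{n,∞}} < ∞ and every Lipschitz function f : ℝⁿ → ℝ with compact support, ∫_{ℝⁿ} |f(x)| dx ≤ c(n)·‖1/w‖_{L^{n,∞}}^{1/2}·(∫_{ℝⁿ} |∇f(x)| dx)^{1/2}·(∫_{ℝⁿ} w(x)|f(x)| dx)^{1/2}. -/
open MeasureTheory Set
open scoped ENNReal NNReal

/-- The weak-`Lⁿ` quasinorm of `W`: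
`‖W‖_{L^{n,∞}} = sup_{t>0} t · (λ{W > t})^{1/n}`. -/
noncomputable def weakLnNorm {α : Type*} [MeasurableSpace α] (μ : Measure α) (n : ℕ)
    (W : α → ℝ) : ℝ≥0∞ :=
  ⨆ t ∈ Set.Ioi (0:ℝ), ENNReal.ofReal t * μ {x | t < W x} ^ ((n : ℝ)⁻¹)

/-!
Split `∫ |f|` along the sublevel set `{w < t}`. On it, Hölder's inequality with exponents
`(n/(n-1), n)` and the weak-type bound `λ{w < t}^{1/n} ≤ t ‖1/w‖_{L^{n,∞}}` give at most
`t ‖1/w‖_{L^{n,∞}} ‖f‖_{n/(n-1)}`; off it `|f| ≤ w |f| / t`. Optimizing over `t` yields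
`∫ |f| ≤ 2 (‖1/w‖_{L^{n,∞}} ‖f‖_{n/(n-1)})^{1/2} (∫ w |f|)^{1/2}`, and the
Gagliardo–Nirenberg–Sobolev inequality bounds `‖f‖_{n/(n-1)}` by `∫ |∇f|`. The latter, known for
`C¹` functions, passes to Lipschitz `f` by mollification: the derivative of `φ ⋆ f` is `φ`
convolved with the a.e. derivative of `f` (Rademacher), so its `L¹` norm does not exceed that
of `∇f`.
-/
open Filter
open scoped Convolution Topology

section Mollification

variable {E : Type*} [NormedAddCommGroup E] [NormedSpace ℝ E] [MeasurableSpace E] [BorelSpace E]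
  [FiniteDimensional ℝ E] {μ : Measure E} [μ.IsAddHaarMeasure] {K : ℝ≥0} {f : E → ℝ}

theorem ContDiffBump.contDiff_normed_convolution (φ : ContDiffBump (0 : E))
    (hf : LocallyIntegrable f μ) :
    ContDiff ℝ 1 (φ.normed μ ⋆[ContinuousLinearMap.lsmul ℝ ℝ, μ] f) :=
  φ.hasCompactSupport_normed.contDiff_convolution_left _ φ.contDiff_normed hf

theorem LipschitzWith.fderiv_normed_convolution_apply (hf : LipschitzWith K f)
    (φ : ContDiffBump (0 : E)) (x v : E) :
    fderiv ℝ (φ.normed μ ⋆[ContinuousLinearMap.lsmul ℝ ℝ, μ] f) x v =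
      ∫ y, lineDeriv ℝ f y v * φ.normed μ (x - y) ∂μ := by
  set ψ := φ.normed μ
  set g := ψ ⋆[ContinuousLinearMap.lsmul ℝ ℝ, μ] f
  have hint : ∀ z, Integrable (fun u => ψ u * f (z - u)) μ := fun z =>
    (φ.continuous_normed.mul (hf.continuous.comp (continuous_const.sub continuous_id)))
      |>.integrable_of_hasCompactSupport φ.hasCompactSupport_normed.mul_right
  have hslope : ∀ t : ℝ, t⁻¹ • (g (x + t • v) - g x) =
      ∫ y, (t⁻¹ • (f (y + t • v) - f y)) * ψ (x - y) ∂μ := by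
    intro t
    calc t⁻¹ • (g (x + t • v) - g x)
        = ∫ u, (t⁻¹ • (f (x - u + t • v) - f (x - u))) * ψ u ∂μ := by
          simp only [g, convolution_def, ContinuousLinearMap.lsmul_apply, smul_eq_mul]
          rw [← integral_sub (hint _) (hint _), ← integral_const_mul]
          congr 1 with u
          rw [sub_add_eq_add_sub]
          ring
      _ = ∫ y, (t⁻¹ • (f (y + t • v) - f y)) * ψ (x - y) ∂μ := by
          rw [← integral_sub_left_eq_self _ μ x]
          simp only [sub_sub_cancel]
  have hg : HasFDerivAt g (fderiv ℝ g x) x :=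
    ((φ.contDiff_normed_convolution hf.continuous.locallyIntegrable).differentiable
      one_ne_zero x).hasFDerivAt
  exact tendsto_nhds_unique (hg.hasLineDerivAt v).tendsto_slope_zero_right
    ((hf.integral_inv_smul_sub_mul_tendsto_integral_lineDeriv_mul
      (φ.integrable_normed.comp_sub_left x) v).congr fun t => (hslope t).symm)

theorem LipschitzWith.enorm_fderiv_normed_convolution_le (hf : LipschitzWith K f)
    (φ : ContDiffBump (0 : E)) (x : E) :
    ‖fderiv ℝ (φ.normed μ ⋆[ContinuousLinearMap.lsmul ℝ ℝ, μ] f) x‖ₑ ≤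
      ∫⁻ y, ‖fderiv ℝ f y‖ₑ * ‖φ.normed μ (x - y)‖ₑ ∂μ := by
  refine ContinuousLinearMap.opENorm_le_bound _ fun v => ?_
  rw [hf.fderiv_normed_convolution_apply]
  calc ‖∫ y, lineDeriv ℝ f y v * φ.normed μ (x - y) ∂μ‖ₑ
      ≤ ∫⁻ y, ‖lineDeriv ℝ f y v * φ.normed μ (x - y)‖ₑ ∂μ :=
        enorm_integral_le_lintegral_enorm _
    _ ≤ ∫⁻ y, ‖fderiv ℝ f y‖ₑ * ‖φ.normed μ (x - y)‖ₑ * ‖v‖ₑ ∂μ := by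
        refine lintegral_mono_ae ?_
        filter_upwards [hf.ae_differentiableAt (μ := μ)] with y hy
        rw [hy.lineDeriv_eq_fderiv, enorm_mul, mul_right_comm]
        gcongr
        exact ContinuousLinearMap.le_opENorm _ _
    _ = (∫⁻ y, ‖fderiv ℝ f y‖ₑ * ‖φ.normed μ (x - y)‖ₑ ∂μ) * ‖v‖ₑ :=
        lintegral_mul_const' _ _ enorm_ne_top

theorem LipschitzWith.lintegral_enorm_fderiv_normed_convolution_le (hf : LipschitzWith K f)
    (φ : ContDiffBump (0 : E)) :
    ∫⁻ x, ‖fderiv ℝ (φ.normed μ ⋆[ContinuousLinearMap.lsmul ℝ ℝ, μ] f) x‖ₑ ∂μ ≤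
      ∫⁻ x, ‖fderiv ℝ f x‖ₑ ∂μ := by
  have hmass : ∫⁻ x, ‖φ.normed μ x‖ₑ ∂μ = 1 := by
    rw [lintegral_enorm_of_nonneg fun x => φ.nonneg_normed x,
      ← ofReal_integral_eq_lintegral_ofReal φ.integrable_normed (ae_of_all _ φ.nonneg_normed),
      φ.integral_normed, ENNReal.ofReal_one]
  calc ∫⁻ x, ‖fderiv ℝ (φ.normed μ ⋆[ContinuousLinearMap.lsmul ℝ ℝ, μ] f) x‖ₑ ∂μ
      ≤ ∫⁻ x, ∫⁻ y, ‖fderiv ℝ f y‖ₑ * ‖φ.normed μ (x - y)‖ₑ ∂μ ∂μ :=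
        lintegral_mono fun x => hf.enorm_fderiv_normed_convolution_le φ x
    _ = ∫⁻ y, ∫⁻ x, ‖fderiv ℝ f y‖ₑ * ‖φ.normed μ (x - y)‖ₑ ∂μ ∂μ :=
        lintegral_lintegral_swap <| (((measurable_fderiv ℝ f).enorm.comp measurable_snd).mul
          (φ.continuous_normed.measurable.enorm.comp (measurable_fst.sub measurable_snd)))
            |>.aemeasurable
    _ = ∫⁻ y, ‖fderiv ℝ f y‖ₑ ∂μ := by
        congr 1 with y
        rw [lintegral_const_mul' _ _ enorm_ne_top,
          lintegral_sub_right_eq_self (fun x => ‖φ.normed μ x‖ₑ) y, hmass, mul_one]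

theorem LipschitzWith.eLpNorm_le_eLpNorm_fderiv_one (hf : LipschitzWith K f)
    (h2f : HasCompactSupport f) {p : ℝ≥0} (hp : NNReal.HolderConjugate (Module.finrank ℝ E) p) :
    eLpNorm f p μ ≤ eLpNormLESNormFDerivOneConst μ p * eLpNorm (fderiv ℝ f) 1 μ := by
  let φ : ℕ → ContDiffBump (0 : E) := fun k =>
    ⟨1 / (k + 2), 1 / (k + 1), by positivity, by gcongr; linarith⟩
  have hφ : Tendsto (fun k => (φ k).rOut) atTop (𝓝 0) :=
    tendsto_one_div_add_atTop_nhds_zero_nat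
  refine Lp.eLpNorm_le_of_ae_tendsto (u := atTop)
    (f := fun k => (φ k).normed μ ⋆[ContinuousLinearMap.lsmul ℝ ℝ, μ] f)
    (Eventually.of_forall fun k => ?_)
    (fun k => ((φ k).contDiff_normed_convolution hf.continuous.locallyIntegrable).continuous
      |>.aestronglyMeasurable)
    (ae_of_all _ fun x => ContDiffBump.convolution_tendsto_right_of_continuous hφ hf.continuous x)
  calc eLpNorm ((φ k).normed μ ⋆[ContinuousLinearMap.lsmul ℝ ℝ, μ] f) p μ
      ≤ eLpNormLESNormFDerivOneConst μ p *
          eLpNorm (fderiv ℝ ((φ k).normed μ ⋆[ContinuousLinearMap.lsmul ℝ ℝ, μ] f)) 1 μ :=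
        MeasureTheory.eLpNorm_le_eLpNorm_fderiv_one μ
          ((φ k).contDiff_normed_convolution hf.continuous.locallyIntegrable)
          ((φ k).hasCompactSupport_normed.convolution _ h2f) hp
    _ ≤ eLpNormLESNormFDerivOneConst μ p * eLpNorm (fderiv ℝ f) 1 μ := by
        simp only [eLpNorm_one_eq_lintegral_enorm]
        exact mul_le_mul_right (hf.lintegral_enorm_fderiv_normed_convolution_le (φ k)) _

end Mollification

theorem ENNReal.le_two_mul_rpow_mul_rpow_of_forall_le {L a b : ℝ≥0∞} (ha : a ≠ 0) (hb : b ≠ 0)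
    (h : ∀ t : ℝ≥0, 0 < t → L ≤ a * t + b / t) :
    L ≤ 2 * a ^ (1 / 2 : ℝ) * b ^ (1 / 2 : ℝ) := by
  rcases eq_or_ne a ⊤ with rfl | ha'
  · simp [ENNReal.top_rpow_of_pos, hb, ENNReal.mul_top, ENNReal.top_mul]
  rcases eq_or_ne b ⊤ with rfl | hb'
  · simp [ENNReal.top_rpow_of_pos, ha, ENNReal.mul_top]
  lift a to ℝ≥0 using ha'
  lift b to ℝ≥0 using hb'
  have ha0 : 0 < a := pos_iff_ne_zero.mpr (by exact_mod_cast ha)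
  have hb0 : 0 < b := pos_iff_ne_zero.mpr (by exact_mod_cast hb)
  -- both terms equal `√(a b)` at `t = √(b / a)`
  have ht : 0 < NNReal.sqrt (b / a) := NNReal.sqrt_pos.mpr (div_pos hb0 ha0)
  have hat : a * NNReal.sqrt (b / a) = NNReal.sqrt a * NNReal.sqrt b := by
    have : NNReal.sqrt a ≠ 0 := by positivity
    rw [NNReal.sqrt_div]
    nth_rw 1 [← NNReal.mul_self_sqrt a]
    field_simp
  have hbt : b / NNReal.sqrt (b / a) = NNReal.sqrt a * NNReal.sqrt b := by
    have : NNReal.sqrt b ≠ 0 := by positivity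
    rw [NNReal.sqrt_div]
    nth_rw 1 [← NNReal.mul_self_sqrt b]
    field_simp
  calc L ≤ a * NNReal.sqrt (b / a) + b / NNReal.sqrt (b / a) := h _ ht
    _ = 2 * a ^ (1 / 2 : ℝ) * b ^ (1 / 2 : ℝ) := by
      rw [← ENNReal.coe_mul, ← ENNReal.coe_div ht.ne', hat, hbt, ← two_mul, ENNReal.coe_mul,
        NNReal.sqrt_eq_rpow, NNReal.sqrt_eq_rpow, ENNReal.coe_rpow_of_nonneg _ (by norm_num),
        ENNReal.coe_rpow_of_nonneg _ (by norm_num), mul_assoc]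

section WeakLn

variable {α : Type*} [MeasurableSpace α] {μ : Measure α} {n : ℕ}

theorem ofReal_mul_measure_rpow_le_weakLnNorm (W : α → ℝ) {t : ℝ} (ht : 0 < t) :
    ENNReal.ofReal t * μ {x | t < W x} ^ (n : ℝ)⁻¹ ≤ weakLnNorm μ n W :=
  le_iSup₂ (f := fun s (_ : s ∈ Ioi (0 : ℝ)) => ENNReal.ofReal s * μ {x | s < W x} ^ (n : ℝ)⁻¹)
    t ht

theorem weakLnNorm_ne_zero (hμ : μ ≠ 0) {W : α → ℝ} (hW : ∀ x, 0 < W x) :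
    weakLnNorm μ n W ≠ 0 := by
  intro hzero
  have hnull : ∀ k : ℕ, μ {x | 1 / ((k : ℝ) + 1) < W x} = 0 := fun k => by
    have h := ofReal_mul_measure_rpow_le_weakLnNorm (μ := μ) (n := n) W
      (Nat.one_div_pos_of_nat (n := k))
    rw [hzero, nonpos_iff_eq_zero, mul_eq_zero, ENNReal.ofReal_eq_zero, ENNReal.rpow_eq_zero_iff]
      at h
    rcases h with h | ⟨h, -⟩ | ⟨-, h⟩
    · exact absurd h (not_le.mpr Nat.one_div_pos_of_nat)
    · exact h
    · exact absurd h (not_lt.mpr (by positivity))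
  have hcover : (univ : Set α) = ⋃ k : ℕ, {x | 1 / ((k : ℝ) + 1) < W x} :=
    (eq_univ_of_forall fun x => mem_iUnion.mpr (exists_nat_one_div_lt (hW x))).symm
  exact hμ (Measure.measure_univ_eq_zero.mp (hcover ▸ measure_iUnion_null hnull))

theorem measure_lt_rpow_le_mul_weakLnNorm {w : α → ℝ} (hw : ∀ x, 0 < w x) {t : ℝ≥0}
    (ht : 0 < t) :
    μ {x | w x < t} ^ (n : ℝ)⁻¹ ≤ t * weakLnNorm μ n (fun x => (w x)⁻¹) := by
  have hsub : {x | w x < t} ⊆ {x | (t : ℝ)⁻¹ < (w x)⁻¹} := fun x hx =>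
    inv_strictAnti₀ (hw x) hx
  have hle := ofReal_mul_measure_rpow_le_weakLnNorm (μ := μ) (n := n) (fun x => (w x)⁻¹)
    (inv_pos.mpr (NNReal.coe_pos.mpr ht))
  rw [← NNReal.coe_inv, ENNReal.ofReal_coe_nnreal, ENNReal.coe_inv ht.ne'] at hle
  calc μ {x | w x < t} ^ (n : ℝ)⁻¹
      ≤ μ {x | (t : ℝ)⁻¹ < (w x)⁻¹} ^ (n : ℝ)⁻¹ := by gcongr
    _ ≤ t * weakLnNorm μ n (fun x => (w x)⁻¹) := by
      rwa [ENNReal.inv_mul_le_iff (by simpa using ht.ne') ENNReal.coe_ne_top] at hle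

theorem setLIntegral_enorm_le_eLpNorm_mul_measure_rpow {ε : Type*} [TopologicalSpace ε]
    [ContinuousENorm ε] {f : α → ε} {p : ℝ≥0∞} (hp : 1 ≤ p) (hf : AEStronglyMeasurable f μ)
    (s : Set α) :
    ∫⁻ x in s, ‖f x‖ₑ ∂μ ≤ eLpNorm f p μ * μ s ^ (1 - 1 / p.toReal) := by
  calc ∫⁻ x in s, ‖f x‖ₑ ∂μ = eLpNorm f 1 (μ.restrict s) := eLpNorm_one_eq_lintegral_enorm.symm
    _ ≤ eLpNorm f p (μ.restrict s) *
          μ.restrict s univ ^ (1 / (1 : ℝ≥0∞).toReal - 1 / p.toReal) :=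
      eLpNorm_le_eLpNorm_mul_rpow_measure_univ hp hf.restrict
    _ ≤ eLpNorm f p μ * μ s ^ (1 - 1 / p.toReal) := by
      rw [Measure.restrict_apply_univ, ENNReal.toReal_one, div_one]
      gcongr
      exact Measure.restrict_le_self

theorem lintegral_abs_le_weakLnNorm_mul_add {p : ℝ≥0} (hp : NNReal.HolderConjugate n p)
    {f w : α → ℝ} (hf : AEStronglyMeasurable f μ) (hw : Measurable w) (hwpos : ∀ x, 0 < w x)
    {t : ℝ≥0} (ht : 0 < t) :
    ∫⁻ x, ENNReal.ofReal |f x| ∂μ ≤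
      weakLnNorm μ n (fun x => (w x)⁻¹) * eLpNorm f p μ * t +
        (∫⁻ x, ENNReal.ofReal (w x * |f x|) ∂μ) / t := by
  set s := {x | w x < t}
  have hs : MeasurableSet s := measurableSet_lt hw measurable_const
  have ht' : (t : ℝ≥0∞) ≠ 0 := by simpa using ht.ne'
  have hexp : 1 - 1 / ((p : ℝ≥0∞).toReal) = (n : ℝ)⁻¹ := by
    have := hp.coe.inv_add_inv_eq_one
    push_cast at this
    rw [ENNReal.coe_toReal, one_div]
    linarith
  have hsplit : ∀ x, ENNReal.ofReal |f x| ≤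
      s.indicator (fun x => ‖f x‖ₑ) x + ENNReal.ofReal (w x * |f x|) * (t : ℝ≥0∞)⁻¹ := by
    intro x
    by_cases hx : x ∈ s
    · simp [hx, Real.enorm_eq_ofReal_abs]
    · rw [indicator_of_notMem hx, zero_add, ← div_eq_mul_inv,
        ENNReal.le_div_iff_mul_le (Or.inl ht') (Or.inl ENNReal.coe_ne_top),
        ← ENNReal.ofReal_coe_nnreal, ← ENNReal.ofReal_mul (abs_nonneg _), mul_comm]
      exact ENNReal.ofReal_le_ofReal (mul_le_mul_of_nonneg_right (not_lt.mp hx) (abs_nonneg _))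
  calc ∫⁻ x, ENNReal.ofReal |f x| ∂μ
      ≤ ∫⁻ x, s.indicator (fun x => ‖f x‖ₑ) x + ENNReal.ofReal (w x * |f x|) * (t : ℝ≥0∞)⁻¹ ∂μ :=
        lintegral_mono hsplit
    _ = ∫⁻ x in s, ‖f x‖ₑ ∂μ + (∫⁻ x, ENNReal.ofReal (w x * |f x|) ∂μ) / t := by
      rw [lintegral_add_left' (hf.enorm.indicator hs), lintegral_indicator hs,
        lintegral_mul_const' _ _ (ENNReal.inv_ne_top.mpr ht'), div_eq_mul_inv]
    _ ≤ eLpNorm f p μ * μ s ^ (n : ℝ)⁻¹ + (∫⁻ x, ENNReal.ofReal (w x * |f x|) ∂μ) / t := by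
      rw [← hexp]
      gcongr
      exact setLIntegral_enorm_le_eLpNorm_mul_measure_rpow (by exact_mod_cast hp.symm.lt.le) hf s
    _ ≤ eLpNorm f p μ * (t * weakLnNorm μ n (fun x => (w x)⁻¹)) +
        (∫⁻ x, ENNReal.ofReal (w x * |f x|) ∂μ) / t := by
      gcongr
      exact measure_lt_rpow_le_mul_weakLnNorm hwpos ht
    _ = _ := by ring

theorem lintegral_abs_le_two_mul_weakLnNorm_eLpNorm {p : ℝ≥0} (hp : NNReal.HolderConjugate n p)
    {f w : α → ℝ} (hf : AEStronglyMeasurable f μ) (hw : Measurable w) (hwpos : ∀ x, 0 < w x) :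
    ∫⁻ x, ENNReal.ofReal |f x| ∂μ ≤
      2 * weakLnNorm μ n (fun x => (w x)⁻¹) ^ (1 / 2 : ℝ) * eLpNorm f p μ ^ (1 / 2 : ℝ) *
        (∫⁻ x, ENNReal.ofReal (w x * |f x|) ∂μ) ^ (1 / 2 : ℝ) := by
  by_cases hf0 : f =ᵐ[μ] 0
  · have hL : ∫⁻ x, ENNReal.ofReal |f x| ∂μ = 0 :=
      (lintegral_eq_zero_iff' hf.aemeasurable.abs.ennreal_ofReal).mpr
        (hf0.mono fun x hx => by simp [hx])
    simp [hL]
  have hμ : μ ≠ 0 := by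
    rintro rfl
    exact hf0 (by simp [EventuallyEq])
  have hN : weakLnNorm μ n (fun x => (w x)⁻¹) ≠ 0 :=
    weakLnNorm_ne_zero hμ fun x => inv_pos.mpr (hwpos x)
  have hfp : eLpNorm f p μ ≠ 0 :=
    mt (eLpNorm_eq_zero_iff hf (by simpa using hp.symm.ne_zero)).mp hf0
  have hB : ∫⁻ x, ENNReal.ofReal (w x * |f x|) ∂μ ≠ 0 := by
    have hmeas : AEMeasurable (fun x => ENNReal.ofReal (w x * |f x|)) μ :=
      (hw.aemeasurable.mul hf.aemeasurable.abs).ennreal_ofReal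
    rw [Ne, lintegral_eq_zero_iff' hmeas]
    refine mt (fun h => h.mono fun x hx => ?_) hf0
    have : w x * |f x| ≤ 0 := by simpa using hx
    exact abs_nonpos_iff.mp (nonpos_of_mul_nonpos_right this (hwpos x))
  calc ∫⁻ x, ENNReal.ofReal |f x| ∂μ
      ≤ 2 * (weakLnNorm μ n (fun x => (w x)⁻¹) * eLpNorm f p μ) ^ (1 / 2 : ℝ) *
          (∫⁻ x, ENNReal.ofReal (w x * |f x|) ∂μ) ^ (1 / 2 : ℝ) :=
        ENNReal.le_two_mul_rpow_mul_rpow_of_forall_le (mul_ne_zero hN hfp) hB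
          fun t ht => lintegral_abs_le_weakLnNorm_mul_add hp hf hw hwpos ht
    _ = _ := by rw [ENNReal.mul_rpow_of_nonneg _ _ (by norm_num)]; ring

end WeakLn

/-- **Euclidean L¹ uncertainty inequality with weak-`Lⁿ` weights.**
For `n ≥ 2` there is `c(n) > 0` such that for every measurable `w : ℝⁿ → (0,∞)` with
`‖1/w‖_{L^{n,∞}} < ∞` and every compactly supported Lipschitz `f : ℝⁿ → ℝ`,
`∫ |f| ≤ c(n) ‖1/w‖_{L^{n,∞}}^{1/2} (∫ |∇f|)^{1/2} (∫ w |f|)^{1/2}`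
(in the extended reals). -/
theorem euclidean_l1_uncertainty (n : ℕ) (hn : 2 ≤ n) :
    ∃ c : ℝ, 0 < c ∧
      ∀ w : EuclideanSpace ℝ (Fin n) → ℝ, Measurable w → (∀ x, 0 < w x) →
        weakLnNorm volume n (fun x => (w x)⁻¹) ≠ ⊤ →
        ∀ (K : ℝ≥0) (f : EuclideanSpace ℝ (Fin n) → ℝ),
          LipschitzWith K f → HasCompactSupport f →
          ∫⁻ x, ENNReal.ofReal |f x| ≤
            ENNReal.ofReal c * (weakLnNorm volume n (fun x => (w x)⁻¹)) ^ ((1:ℝ)/2) *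
              (∫⁻ x, ENNReal.ofReal ‖fderiv ℝ f x‖) ^ ((1:ℝ)/2) *
                (∫⁻ x, ENNReal.ofReal (w x * |f x|)) ^ ((1:ℝ)/2) := by
  obtain ⟨p, hp⟩ : ∃ p : ℝ≥0, NNReal.HolderConjugate n p :=
    ⟨_, .conjExponent (by exact_mod_cast hn)⟩
  set C := eLpNormLESNormFDerivOneConst (volume : Measure (EuclideanSpace ℝ (Fin n))) p
  refine ⟨2 * ((C : ℝ) + 1) ^ (1 / 2 : ℝ), by positivity, fun w hw hwpos _ K f hf h2f => ?_⟩
  have hsobolev : eLpNorm f p volume ≤ (C + 1) * ∫⁻ x, ENNReal.ofReal ‖fderiv ℝ f x‖ :=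
    calc eLpNorm f p volume ≤ C * eLpNorm (fderiv ℝ f) 1 volume :=
          hf.eLpNorm_le_eLpNorm_fderiv_one h2f (by rwa [finrank_euclideanSpace_fin])
      _ ≤ (C + 1) * ∫⁻ x, ENNReal.ofReal ‖fderiv ℝ f x‖ := by
          simp_rw [eLpNorm_one_eq_lintegral_enorm, ofReal_norm]
          gcongr
          exact le_self_add
  calc ∫⁻ x, ENNReal.ofReal |f x|
      ≤ 2 * weakLnNorm volume n (fun x => (w x)⁻¹) ^ (1 / 2 : ℝ) *
          eLpNorm f p volume ^ (1 / 2 : ℝ) *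
            (∫⁻ x, ENNReal.ofReal (w x * |f x|)) ^ (1 / 2 : ℝ) :=
        lintegral_abs_le_two_mul_weakLnNorm_eLpNorm hp hf.continuous.aestronglyMeasurable hw hwpos
    _ ≤ 2 * weakLnNorm volume n (fun x => (w x)⁻¹) ^ (1 / 2 : ℝ) *
          ((C + 1) * ∫⁻ x, ENNReal.ofReal ‖fderiv ℝ f x‖) ^ (1 / 2 : ℝ) *
            (∫⁻ x, ENNReal.ofReal (w x * |f x|)) ^ (1 / 2 : ℝ) := by
        gcongr
    _ = _ := by
        rw [ENNReal.mul_rpow_of_nonneg _ _ (by norm_num), ENNReal.ofReal_mul (by norm_num),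
          ← ENNReal.ofReal_rpow_of_pos (by positivity), ← NNReal.coe_one, ← NNReal.coe_add,
          ENNReal.ofReal_coe_nnreal, ENNReal.ofReal_ofNat]
        push_cast
        ring
end

section
/- (General scheme for constructing isoperimetric weights.) Let (Ω,d,μ) be a metric measure space with isoperimetric profile I assumed concave, continuous, I(0) = 0, strictly positive on (0, μ(Ω)), and (if μ(Ω) < ∞) symmetric about μ(Ω)/2; set Φ(t) = min{t, μ(Ω)/2}/I(min{t, μ(Ω)/2}). Let g : [0, μ(Ω)) → [0,∞) be measurable with g > 0 a.e., let g* denote its decreasing rearrangement with respect to Lebesgue measure, g*(t) = inf{s ≥ 0 : λ{g > s} ≤ t}, and suppose K := sup_{0<t<μ(Ω)} g*(t)·Φ(t) < ∞. Let σ : Ω → [0, μ(Ω)) be measurable and measure preserving (the pushforward of μ under σ is Lebesgue measure on [0, μ(Ω))). Then w := 1/(g* ∘ σ) is an isoperimetric weight: sup_{r>0} (1/r)·Φ(μ{w ≤ r}) ≤ K. -/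
/-!
If `g*(t) < 1/r` for some `t < μ{w ≤ r}`, then, `g*` being nonincreasing and positive on
`[0, μ(Ω))`, the set `{w ≤ r}` lies in `σ⁻¹[0, t]` up to a null set, whose measure is at most `t`
since `σ` is measure preserving: a contradiction. Hence `g* ≥ 1/r` on `(0, t₀)` with
`t₀ = min {μ{w ≤ r}, μ(Ω)/2}`, where `Φ(t) = t / I(t) ≤ K / g*(t) ≤ K r`, and continuity of `I`
at `t₀` gives `Φ(μ{w ≤ r}) = t₀ / I(t₀) ≤ K r`.
-/

open MeasureTheory Filter Set Topology
open scoped ENNReal NNReal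

/-- The interval `[0, μ(Ω))` of `ℝ`, viewed as the natural domain of rearrangements. -/
def domSet {Ω : Type*} [MeasurableSpace Ω] (μ : Measure Ω) : Set ℝ :=
  {u : ℝ | 0 ≤ u ∧ ENNReal.ofReal u < μ Set.univ}

/-- The decreasing rearrangement of `g` with respect to the measure `ν`:
`g*(t) = inf {s ≥ 0 : ν{g > s} ≤ t}`. -/
noncomputable def decRearr (ν : Measure ℝ) (g : ℝ → ℝ) (t : ℝ) : ℝ :=
  sInf {s : ℝ | 0 ≤ s ∧ ν {u | s < g u} ≤ ENNReal.ofReal t}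

/-- `Φ(t) = min{t, μ(Ω)/2} / I(min{t, μ(Ω)/2})` (interpreting `min{t, ∞} = t` when
`μ(Ω) = ∞`). -/
noncomputable def PhiGen {Ω : Type*} [MeasurableSpace Ω] (μ : Measure Ω) (I : ℝ → ℝ)
    (t : ℝ) : ℝ :=
  (min (ENNReal.ofReal t) (μ Set.univ / 2)).toReal /
    I ((min (ENNReal.ofReal t) (μ Set.univ / 2)).toReal)

def rearrLevels (ν : Measure ℝ) (g : ℝ → ℝ) (t : ℝ) : Set ℝ :=
  {s | 0 ≤ s ∧ ν {u | s < g u} ≤ ENNReal.ofReal t}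

section Rearrangement

variable {ν : Measure ℝ} {g : ℝ → ℝ} {s t t' : ℝ}

theorem decRearr_eq_sInf : decRearr ν g t = sInf (rearrLevels ν g t) := rfl

theorem bddBelow_rearrLevels : BddBelow (rearrLevels ν g t) := ⟨0, fun _ hs => hs.1⟩

theorem decRearr_nonneg : 0 ≤ decRearr ν g t := Real.sInf_nonneg fun _ hs => hs.1

theorem rearrLevels_mono (h : t ≤ t') : rearrLevels ν g t ⊆ rearrLevels ν g t' :=
  fun _ hs => ⟨hs.1, hs.2.trans (ENNReal.ofReal_le_ofReal h)⟩

theorem decRearr_anti (hne : (rearrLevels ν g t).Nonempty) (h : t ≤ t') :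
    decRearr ν g t' ≤ decRearr ν g t :=
  csInf_le_csInf bddBelow_rearrLevels hne (rearrLevels_mono h)

theorem measure_lt_le_of_decRearr_lt (hne : (rearrLevels ν g t).Nonempty)
    (h : decRearr ν g t < s) : ν {u | s < g u} ≤ ENNReal.ofReal t := by
  obtain ⟨s', hs', hs's⟩ := (csInf_lt_iff bddBelow_rearrLevels hne).1 h
  exact (measure_mono fun u hu => hs's.trans hu).trans hs'.2

theorem decRearr_pos (hne : (rearrLevels ν g t).Nonempty)
    (ht : ENNReal.ofReal t < ν {u | 0 < g u}) : 0 < decRearr ν g t := by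
  refine decRearr_nonneg.lt_of_ne fun h0 => ht.not_ge ?_
  have hunion : {u | 0 < g u} = ⋃ n : ℕ, {u | ((n : ℝ) + 1)⁻¹ < g u} := by
    ext u
    simp only [mem_ofPred_eq, mem_iUnion]
    refine ⟨fun hu => ?_, fun ⟨n, hn⟩ => lt_trans (by positivity) hn⟩
    simpa only [one_div] using exists_nat_one_div_lt hu
  have hmono : Monotone fun n : ℕ => {u | ((n : ℝ) + 1)⁻¹ < g u} := fun m n hmn u hu =>
    show ((n : ℝ) + 1)⁻¹ < g u from lt_of_le_of_lt (by gcongr) hu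
  rw [hunion, hmono.measure_iUnion]
  exact iSup_le fun n => measure_lt_le_of_decRearr_lt hne (h0 ▸ by positivity)

theorem rearrLevels_nonempty (hg : Measurable g) (ht : 0 < t)
    (hfin : ∃ s, ν {u | s < g u} ≠ ⊤) : (rearrLevels ν g t).Nonempty := by
  have hlim : Tendsto (fun s => ν {u | s < g u}) atTop (𝓝 0) := by
    have hempty : ⋂ s : ℝ, {u | s < g u} = ∅ :=
      eq_empty_of_forall_notMem fun u hu => lt_irrefl (g u) (mem_iInter.1 hu (g u))
    have := tendsto_measure_iInter_atTop (μ := ν)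
      (fun s => (measurableSet_lt measurable_const hg).nullMeasurableSet)
      (fun s s' hss' u hu => lt_of_le_of_lt hss' hu) hfin
    rwa [hempty, measure_empty] at this
  obtain ⟨s, hs, hs0⟩ :=
    ((hlim.eventually_lt_const (ENNReal.ofReal_pos.2 ht)).and (eventually_ge_atTop 0)).exists
  exact ⟨s, hs0, hs.le⟩

theorem decRearr_eq_zero_of_measure_eq_top (h : ∀ s, ν {u | s < g u} = ⊤) :
    decRearr ν g t = 0 := by
  have hempty : rearrLevels ν g t = ∅ :=
    eq_empty_of_forall_notMem fun s hs => ENNReal.ofReal_ne_top (top_le_iff.1 (h s ▸ hs.2))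
  rw [decRearr_eq_sInf, hempty, Real.sInf_empty]

end Rearrangement

theorem ENNReal.lt_of_le_half {a b : ℝ≥0∞} (ha0 : 0 < a) (ha : a ≠ ⊤) (hab : a ≤ b / 2) :
    a < b :=
  calc a < a + a := ENNReal.lt_add_right ha ha0.ne'
    _ = a * 2 := (mul_two a).symm
    _ ≤ b := (ENNReal.le_div_iff_mul_le (by simp) (by simp)).1 hab

section Weight

variable {Ω : Type*} [MeasurableSpace Ω] {μ : Measure Ω} {σ : Ω → ℝ} {g : ℝ → ℝ} {r t : ℝ}

local notation "ν" => volume.restrict (domSet μ)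

theorem measurableSet_domSet (μ : Measure Ω) : MeasurableSet (domSet μ) :=
  measurableSet_Ici.inter (ENNReal.measurable_ofReal measurableSet_Iio)

theorem PhiGen_of_le (I : ℝ → ℝ) (ht : 0 ≤ t) (h : ENNReal.ofReal t ≤ μ univ / 2) :
    PhiGen μ I t = t / I t := by
  rw [PhiGen, min_eq_left h, ENNReal.toReal_ofReal ht]

theorem decRearr_pos_of_mem_domSet (hσ : MeasurePreserving σ μ ν)
    (hg_pos : ∀ᵐ u ∂ν, 0 < g u)
    (hne : (rearrLevels ν g t).Nonempty) (ht : t ∈ domSet μ) :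
    0 < decRearr ν g t := by
  refine decRearr_pos hne ?_
  rw [measure_congr (ae_eq_univ (s := {u | 0 < g u}).2 (ae_iff.1 hg_pos)),
    ← hσ.measure_preimage MeasurableSet.univ.nullMeasurableSet, preimage_univ]
  exact ht.2

theorem rearrLevels_nonempty_of_measure_ne_top
    (hσ : MeasurePreserving σ μ ν) (hg : Measurable g) (hr : 0 ≤ r)
    (hE : μ {x | (decRearr ν g (σ x))⁻¹ ≤ r} ≠ ⊤) (ht : 0 < t) :
    (rearrLevels ν g t).Nonempty := by
  refine rearrLevels_nonempty hg ht (not_forall.1 fun htop => hE ?_)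
  -- Otherwise no level is admissible, so `g* ≡ 0` (as `sInf ∅ = 0`) and `{w ≤ r} = Ω`.
  have hzero : ∀ x, decRearr ν g (σ x) = 0 := fun _ =>
    decRearr_eq_zero_of_measure_eq_top htop
  simp only [hzero, inv_zero, hr, ofPred_true]
  rw [← preimage_univ (f := σ), hσ.measure_preimage MeasurableSet.univ.nullMeasurableSet]
  exact top_le_iff.1 (htop 0 ▸ measure_mono (subset_univ _))

theorem inv_le_decRearr_of_ofReal_lt_measure
    (hσ : MeasurePreserving σ μ ν) (hg : Measurable g)
    (hg_pos : ∀ᵐ u ∂ν, 0 < g u) (hr : 0 < r)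
    (hE : μ {x | (decRearr ν g (σ x))⁻¹ ≤ r} ≠ ⊤) (ht : 0 < t)
    (htE : ENNReal.ofReal t < μ {x | (decRearr ν g (σ x))⁻¹ ≤ r}) :
    r⁻¹ ≤ decRearr ν g t := by
  have hne := rearrLevels_nonempty_of_measure_ne_top hσ hg hr.le hE ht
  by_contra! hlt
  have hsub : {x | (decRearr ν g (σ x))⁻¹ ≤ r} ⊆
      σ ⁻¹' (Iic t ∪ (domSet μ)ᶜ) := by
    intro x hx
    by_contra hx'
    simp only [mem_preimage, mem_union, mem_Iic, mem_compl_iff, not_or, not_le, not_not] at hx'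
    -- Positivity is essential here, as `0⁻¹ = 0 ≤ r`.
    have hpos := decRearr_pos_of_mem_domSet hσ hg_pos (hne.mono (rearrLevels_mono hx'.1.le)) hx'.2
    have hsmall := (decRearr_anti hne hx'.1.le).trans_lt hlt
    exact (lt_inv_comm₀ hpos hr).1 hsmall |>.not_ge hx
  have hμE : μ {x | (decRearr ν g (σ x))⁻¹ ≤ r} ≤ ENNReal.ofReal t :=
    calc _ ≤ μ (σ ⁻¹' (Iic t ∪ (domSet μ)ᶜ)) := measure_mono hsub
      _ = volume (Iic t ∩ domSet μ) := by
        have hmeas : MeasurableSet (Iic t ∪ (domSet μ)ᶜ) :=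
          measurableSet_Iic.union (measurableSet_domSet μ).compl
        rw [hσ.measure_preimage hmeas.nullMeasurableSet, Measure.restrict_apply hmeas,
          union_inter_distrib_right, compl_inter_self, union_empty]
      _ ≤ volume (Icc 0 t) := measure_mono fun u hu => ⟨hu.2.1, hu.1⟩
      _ = ENNReal.ofReal t := by rw [Real.volume_Icc, sub_zero]
  exact htE.not_ge hμE

theorem div_le_mul_of_ofReal_lt_measure {I : ℝ → ℝ} {K : ℝ}
    (hIpos : ∀ t : ℝ, 0 < t → ENNReal.ofReal t < μ univ → 0 < I t)
    (hK : ∀ t : ℝ, 0 < t → ENNReal.ofReal t < μ univ → decRearr ν g t * PhiGen μ I t ≤ K)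
    (hσ : MeasurePreserving σ μ ν) (hg : Measurable g) (hg_pos : ∀ᵐ u ∂ν, 0 < g u)
    (hr : 0 < r) (hE : μ {x | (decRearr ν g (σ x))⁻¹ ≤ r} ≠ ⊤) (ht : 0 < t)
    (htE : ENNReal.ofReal t < μ {x | (decRearr ν g (σ x))⁻¹ ≤ r})
    (htM : ENNReal.ofReal t ≤ μ univ / 2) :
    t / I t ≤ K * r := by
  have htM' := ENNReal.lt_of_le_half (ENNReal.ofReal_pos.2 ht) ENNReal.ofReal_ne_top htM
  have hinv := inv_le_decRearr_of_ofReal_lt_measure hσ hg hg_pos hr hE ht htE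
  have hKt := hK t ht htM'
  rw [PhiGen_of_le I ht.le htM] at hKt
  have hΦ : r⁻¹ * (t / I t) ≤ K :=
    (mul_le_mul_of_nonneg_right hinv (div_nonneg ht.le (hIpos t ht htM').le)).trans hKt
  rw [mul_comm K]
  exact (inv_mul_le_iff₀ hr).1 hΦ

end Weight

theorem construction_of_isoperimetric_weights_general {Ω : Type*}
    [MeasurableSpace Ω] (μ : Measure Ω)
    (I : ℝ → ℝ)
    (hIcont : ContinuousOn I (domSet μ))
    (hIpos : ∀ t : ℝ, 0 < t → ENNReal.ofReal t < μ Set.univ → 0 < I t)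
    (g : ℝ → ℝ) (hg_meas : Measurable g)
    (hg_pos : ∀ᵐ t ∂(volume.restrict (domSet μ)), 0 < g t)
    (K : ℝ) (hK0 : 0 ≤ K)
    (hK : ∀ t : ℝ, 0 < t → ENNReal.ofReal t < μ Set.univ →
      decRearr (volume.restrict (domSet μ)) g t * PhiGen μ I t ≤ K)
    (σ : Ω → ℝ) (hσ : MeasurePreserving σ μ (volume.restrict (domSet μ))) :
    ∀ r : ℝ, 0 < r →
      PhiGen μ I
          ((μ {x | (decRearr (volume.restrict (domSet μ)) g (σ x))⁻¹ ≤ r}).toReal) ≤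
        K * r := by
  intro r hr
  set E := {x | (decRearr (volume.restrict (domSet μ)) g (σ x))⁻¹ ≤ r}
  by_cases hE : μ E = ⊤
  · simp [PhiGen, hE, mul_nonneg hK0 hr.le]
  rw [PhiGen, ENNReal.ofReal_toReal hE]
  set c := min (μ E) (μ univ / 2)
  rcases ENNReal.toReal_nonneg.eq_or_lt with hc0 | hc
  · rw [← hc0, zero_div]
    exact mul_nonneg hK0 hr.le
  have hc_ne_top : c ≠ ⊤ := (ENNReal.toReal_pos_iff.1 hc).2.ne
  have hcM : c < μ univ :=
    ENNReal.lt_of_le_half (ENNReal.toReal_pos_iff.1 hc).1 hc_ne_top (min_le_right _ _)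
  have hIoo : ∀ t ∈ Ioo 0 c.toReal, ENNReal.ofReal t < c := fun t ht =>
    (ENNReal.ofReal_lt_iff_lt_toReal ht.1.le hc_ne_top).2 ht.2
  have hbound : ∀ t ∈ Ioo 0 c.toReal, t / I t ≤ K * r := fun t ht =>
    div_le_mul_of_ofReal_lt_measure hIpos hK hσ hg_meas hg_pos hr hE ht.1
      ((hIoo t ht).trans_le (min_le_left _ _)) ((hIoo t ht).le.trans (min_le_right _ _))
  have hdom : c.toReal ∈ domSet μ := ⟨hc.le, by rwa [ENNReal.ofReal_toReal hc_ne_top]⟩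
  have hcont : ContinuousWithinAt (fun t => t / I t) (Ioo 0 c.toReal) c.toReal :=
    continuousWithinAt_id.div ((hIcont _ hdom).mono fun t ht => ⟨ht.1.le, (hIoo t ht).trans hcM⟩)
      (hIpos _ hc hdom.2).ne'
  exact hcont.closure_le (by rw [closure_Ioo hc.ne]; exact right_mem_Icc.2 hc.le)
    continuousWithinAt_const hbound

/-- **general scheme for constructing isoperimetric weights.**
Let `I` be the isoperimetric profile of `(Ω,d,μ)` (concave, continuous, zero at zero,
positive on `(0, μ(Ω))`, and symmetric about `μ(Ω)/2` when `μ(Ω) < ∞`), and let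
`Φ(t) = min{t, μ(Ω)/2}/I(min{t, μ(Ω)/2})`. If `g ≥ 0` is measurable, positive a.e. on
`[0, μ(Ω))`, with decreasing rearrangement `g*` satisfying
`K = sup_{0<t<μ(Ω)} g*(t) Φ(t) < ∞`, and `σ : Ω → [0, μ(Ω))` is measure preserving,
then `w = 1/(g* ∘ σ)` is an isoperimetric weight: `sup_{r>0} (1/r) Φ(μ{w ≤ r}) ≤ K`. -/
theorem construction_of_isoperimetric_weights {Ω : Type*} [MetricSpace Ω]
    [MeasurableSpace Ω] [BorelSpace Ω] (μ : Measure Ω) [IsFiniteMeasureOnCompacts μ]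
    (I : ℝ → ℝ)
    (hIprof : ∀ t : ℝ, 0 ≤ t → ENNReal.ofReal t < μ Set.univ →
      ENNReal.ofReal (I t) = isoProfile μ (ENNReal.ofReal t))
    (hIconc : ConcaveOn ℝ (domSet μ) I)
    (hIcont : ContinuousOn I (domSet μ))
    (hI0 : I 0 = 0)
    (hIpos : ∀ t : ℝ, 0 < t → ENNReal.ofReal t < μ Set.univ → 0 < I t)
    (hIsym : μ Set.univ ≠ ⊤ → ∀ t : ℝ, 0 ≤ t → ENNReal.ofReal t < μ Set.univ →
      I ((μ Set.univ).toReal - t) = I t)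
    (g : ℝ → ℝ) (hg_meas : Measurable g) (hg_nonneg : ∀ t, 0 ≤ g t)
    (hg_pos : ∀ᵐ t ∂(volume.restrict (domSet μ)), 0 < g t)
    (K : ℝ) (hK0 : 0 ≤ K)
    (hK : ∀ t : ℝ, 0 < t → ENNReal.ofReal t < μ Set.univ →
      decRearr (volume.restrict (domSet μ)) g t * PhiGen μ I t ≤ K)
    (σ : Ω → ℝ) (hσ : MeasurePreserving σ μ (volume.restrict (domSet μ))) :
    ∀ r : ℝ, 0 < r →
      PhiGen μ I
          ((μ {x | (decRearr (volume.restrict (domSet μ)) g (σ x))⁻¹ ≤ r}).toReal) ≤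
        K * r :=
  construction_of_isoperimetric_weights_general μ I hIcont hIpos g hg_meas hg_pos K hK0 hK σ hσ
end
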